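/- arXiv:2508.05317 — 8 statements merged into one kernel-verified Lean document; each statement's English description precedes it below -/
import Mathlib

section
/- For any F_2F_4-additive code C of length n = α + β, the image of the dual under the map W is contained in the Euclidean dual of the image: W(C^⊥) ⊆ (W(C))^⊥. -/
abbrev F4 : Type := GaloisField 2 2

/-- The inner product `⟨u,v⟩₄ = ω·Σ aᵢcᵢ + Σ bⱼdⱼ` on `F_2^α × F_4^β`. -/
noncomputable def inner4 {α β : ℕ} (ω : F4)
    (u v : (Fin α → ZMod 2) × (Fin β → F4)) : F4 :=
  ω * ∑ i, algebraMap (ZMod 2) F4 (u.1 i * v.1 i) + ∑ j, u.2 j * v.2 j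

/-- Euclidean inner product on `F_2^(α+2β) = F_2^α × F_2^β × F_2^β`. -/
def euclid2 {α β : ℕ}
    (x y : (Fin α → ZMod 2) × (Fin β → ZMod 2) × (Fin β → ZMod 2)) : ZMod 2 :=
  ∑ i, x.1 i * y.1 i + ∑ j, x.2.1 j * y.2.1 j + ∑ j, x.2.2 j * y.2.2 j

/-!
Write every element of `F_4` as `b + ω q` with `b, q ∈ F_2`; `{1, ω}` is an `F_2`-basis since `ω`
is a root of the irreducible `X² + X + 1`. Using `ω² = ω + 1`, the inner product of
`(a | b + ωq)` and `(c | d + ωr)` is `S₁ + ω S₂` with `S₁ = Σ (bd + qr)` and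
`S₂ = Σ ac + Σ (br + qd + qr)`, while the Euclidean product of their `W`-images is `S₁ + S₂`.
So if the former vanishes, both `S₁` and `S₂` vanish, and so does the latter.
-/

section OmegaBasis

variable {K : Type*} [Field K] [Algebra (ZMod 2) K] {ω : K}

local notation "ι" => algebraMap (ZMod 2) K

theorem notMem_range_algebraMap_of_sq_add_add_one (hω : ω ^ 2 + ω + 1 = 0) :
    ω ∉ Set.range ι := by
  rintro ⟨x, rfl⟩
  have hx : ∀ y : ZMod 2, y ^ 2 + y + 1 = 1 := by decide
  apply one_ne_zero (α := K)
  rw [← map_one ι, ← hx x, map_add, map_add, map_pow, map_one, hω]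

theorem algebraMap_add_mul_algebraMap_eq_zero_iff (hω : ω ^ 2 + ω + 1 = 0) {s t : ZMod 2} :
    ι s + ω * ι t = 0 ↔ s = 0 ∧ t = 0 := by
  refine ⟨fun h => ?_, fun ⟨hs, ht⟩ => by simp [hs, ht]⟩
  obtain rfl | rfl : t = 0 ∨ t = 1 := (by decide : ∀ y : ZMod 2, y = 0 ∨ y = 1) t
  · simpa using h
  · refine absurd ⟨-s, ?_⟩ (notMem_range_algebraMap_of_sq_add_add_one hω)
    rw [map_one, mul_one] at h
    rw [map_neg]
    linear_combination -h

theorem exists_algebraMap_add_mul_algebraMap_eq [Finite K] (hK : Nat.card K = 4)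
    (hω : ω ^ 2 + ω + 1 = 0) (x : K) : ∃ b q : ZMod 2, ι b + ω * ι q = x := by
  let f : ZMod 2 × ZMod 2 → K := fun p => ι p.1 + ω * ι p.2
  have hf : Function.Injective f := by
    rintro ⟨b, q⟩ ⟨b', q'⟩ h
    have h0 : ι (b - b') + ω * ι (q - q') = 0 := by
      simp only [f] at h
      rw [map_sub, map_sub]
      linear_combination h
    obtain ⟨hb, hq⟩ := (algebraMap_add_mul_algebraMap_eq_zero_iff hω).1 h0
    rw [sub_eq_zero.1 hb, sub_eq_zero.1 hq]
  have hcard : Nat.card (ZMod 2 × ZMod 2) = Nat.card K := by simp [hK]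
  obtain ⟨⟨b, q⟩, hbq⟩ := ((Nat.bijective_iff_injective_and_card f).2 ⟨hf, hcard⟩).2 x
  exact ⟨b, q, hbq⟩

theorem algebraMap_add_mul_algebraMap_mul (hω : ω ^ 2 + ω + 1 = 0) (b q d r : ZMod 2) :
    (ι b + ω * ι q) * (ι d + ω * ι r) = ι (b * d + q * r) + ω * ι (b * r + q * d + q * r) := by
  have h2 : (2 : K) = 0 := by rw [← map_ofNat ι 2, show (2 : ZMod 2) = 0 from rfl, map_zero]
  simp only [map_add, map_mul]
  linear_combination (ι q * ι r) * hω - ((ω + 1) * ι q * ι r) * h2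

end OmegaBasis

section Coordinates

variable {α β : ℕ} {ω : F4}

local notation "ι" => algebraMap (ZMod 2) F4

theorem exists_eq_algebraMap_add_mul_algebraMap (hω : ω ^ 2 + ω + 1 = 0)
    (v : (Fin α → ZMod 2) × (Fin β → F4)) :
    ∃ (a : Fin α → ZMod 2) (b q : Fin β → ZMod 2), v = (a, fun j => ι (b j) + ω * ι (q j)) := by
  have hcard : Nat.card F4 = 4 := GaloisField.card 2 2 two_ne_zero
  choose b q hbq using fun j => exists_algebraMap_add_mul_algebraMap_eq hcard hω (v.2 j)
  exact ⟨v.1, b, q, Prod.ext rfl (funext fun j => (hbq j).symm)⟩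

theorem inner4_algebraMap_add_mul_algebraMap (hω : ω ^ 2 + ω + 1 = 0)
    (a c : Fin α → ZMod 2) (b q d r : Fin β → ZMod 2) :
    inner4 ω (a, fun j => ι (b j) + ω * ι (q j)) (c, fun j => ι (d j) + ω * ι (r j)) =
      ι (∑ j, (b j * d j + q j * r j)) +
        ω * ι (∑ i, a i * c i + ∑ j, (b j * r j + q j * d j + q j * r j)) := by
  simp only [inner4, algebraMap_add_mul_algebraMap_mul hω, Finset.sum_add_distrib,
    ← Finset.mul_sum, ← map_sum, map_add]
  ring

theorem euclid2_mk_add (a c : Fin α → ZMod 2) (b q d r : Fin β → ZMod 2) :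
    euclid2 (a, b + q, q) (c, d + r, r) =
      ∑ j, (b j * d j + q j * r j) +
        (∑ i, a i * c i + ∑ j, (b j * r j + q j * d j + q j * r j)) := by
  have hβ : ∑ j, (b j + q j) * (d j + r j) + ∑ j, q j * r j =
      ∑ j, (b j * d j + q j * r j) + ∑ j, (b j * r j + q j * d j + q j * r j) := by
    simp only [← Finset.sum_add_distrib]
    exact Finset.sum_congr rfl fun j _ => by ring
  simp only [euclid2, Pi.add_apply]
  linear_combination hβ

end Coordinates

theorem stmt_5_general (α β : ℕ) (ω : F4) (hω : ω ^ 2 + ω + 1 = 0)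
    (C : AddSubgroup ((Fin α → ZMod 2) × (Fin β → F4)))
    (W : ((Fin α → ZMod 2) × (Fin β → F4)) →ₗ[ZMod 2]
        ((Fin α → ZMod 2) × (Fin β → ZMod 2) × (Fin β → ZMod 2)))
    (hW : ∀ (a : Fin α → ZMod 2) (b q : Fin β → ZMod 2),
      W (a, fun j => algebraMap (ZMod 2) F4 (b j) + ω * algebraMap (ZMod 2) F4 (q j))
        = (a, b + q, q)) :
    ∀ v, (∀ u ∈ C, inner4 ω v u = 0) →
      ∀ u ∈ C, euclid2 (W v) (W u) = 0 := by
  intro v hv u hu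
  obtain ⟨a, b, q, rfl⟩ := exists_eq_algebraMap_add_mul_algebraMap hω v
  obtain ⟨c, d, r, rfl⟩ := exists_eq_algebraMap_add_mul_algebraMap hω u
  have h := hv _ hu
  rw [inner4_algebraMap_add_mul_algebraMap hω, algebraMap_add_mul_algebraMap_eq_zero_iff hω] at h
  rw [hW, hW, euclid2_mk_add, h.1, h.2, add_zero]

/-- For any `F_2F_4`-additive code `C`, the image of the dual under the
linear bijection `W` is contained in the Euclidean dual of the image:
`W(C^⊥) ⊆ (W(C))^⊥`. -/
theorem stmt_5 (α β : ℕ) (ω : F4) (hω : ω ^ 2 + ω + 1 = 0)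
    (C : AddSubgroup ((Fin α → ZMod 2) × (Fin β → F4)))
    (W : ((Fin α → ZMod 2) × (Fin β → F4)) →ₗ[ZMod 2]
        ((Fin α → ZMod 2) × (Fin β → ZMod 2) × (Fin β → ZMod 2)))
    (hWbij : Function.Bijective W)
    (hW : ∀ (a : Fin α → ZMod 2) (b q : Fin β → ZMod 2),
      W (a, fun j => algebraMap (ZMod 2) F4 (b j) + ω * algebraMap (ZMod 2) F4 (q j))
        = (a, b + q, q)) :
    ∀ v, (∀ u ∈ C, inner4 ω v u = 0) →
      ∀ u ∈ C, euclid2 (W v) (W u) = 0 :=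
  stmt_5_general α β ω hω C W hW
end

section
/- There exists an F_2F_4-additive code C (with α = β = 2, generated by (1,1|ω,1) and (0,1|ω²,ω)) for which W(C^⊥) is a proper subset of (W(C))^⊥; in particular W(C^⊥) has 4 elements while (W(C))^⊥ has 16 elements. -/
/-- Euclidean dual of a subset of `F_2^(α+2β) = F_2^α × F_2^β × F_2^β`. -/
def binDual {α β : ℕ}
    (S : Set ((Fin α → ZMod 2) × (Fin β → ZMod 2) × (Fin β → ZMod 2))) :
    Set ((Fin α → ZMod 2) × (Fin β → ZMod 2) × (Fin β → ZMod 2)) :=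
  {y | ∀ x ∈ S, ∑ i, y.1 i * x.1 i + ∑ j, y.2.1 j * x.2.1 j + ∑ j, y.2.2 j * x.2.2 j = 0}

lemma AddSubgroup.forall_mem_closure_eq_zero_iff {G M : Type*} [AddGroup G] [AddGroup M]
    (f : G →+ M) (s : Set G) :
    (∀ u ∈ AddSubgroup.closure s, f u = 0) ↔ ∀ u ∈ s, f u = 0 :=
  AddSubgroup.closure_le f.ker

lemma algebraMap_add_mul_algebraMap_eq_zero_iff_s6 {K : Type*} [CommRing K] [Nontrivial K]
    [Algebra (ZMod 2) K] {ω : K} (hω : ω ^ 2 + ω + 1 = 0) (c d : ZMod 2) :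
    algebraMap (ZMod 2) K c + ω * algebraMap (ZMod 2) K d = 0 ↔ c = 0 ∧ d = 0 := by
  have bit (x : ZMod 2) : x = 0 ∨ x = 1 := by revert x; decide
  rcases bit c with rfl | rfl <;> rcases bit d with rfl | rfl <;>
    simp only [map_zero, map_one, mul_zero, mul_one, add_zero, zero_add, true_and, and_true,
      one_ne_zero, and_self, iff_false]
  · rintro rfl; simp at hω
  · intro h; apply one_ne_zero (α := K); linear_combination hω - ω * h

lemma sq_eq_add_one_of_sq_add_add_one_eq_zero {ω : F4} (hω : ω ^ 2 + ω + 1 = 0) :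
    ω ^ 2 = ω + 1 := by
  linear_combination hω - (ω + 1) * (CharP.cast_eq_zero F4 2 : (2 : F4) = 0)

abbrev Bits (α β : ℕ) : Type := (Fin α → ZMod 2) × (Fin β → ZMod 2) × (Fin β → ZMod 2)

abbrev Mixed (α β : ℕ) : Type := (Fin α → ZMod 2) × (Fin β → F4)

section

variable {α β : ℕ}

open Matrix

def binPairing (y : Bits α β) : Bits α β →+ ZMod 2 :=
  AddMonoidHom.mk' (fun x => y.1 ⬝ᵥ x.1 + y.2.1 ⬝ᵥ x.2.1 + y.2.2 ⬝ᵥ x.2.2) fun x x' => by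
    simp only [Prod.fst_add, Prod.snd_add, dotProduct_add]
    ring

noncomputable def inner4Hom (ω : F4) (v : Mixed α β) : Mixed α β →+ F4 :=
  AddMonoidHom.mk' (inner4 ω v) fun u u' => by
    simp only [inner4, Prod.fst_add, Prod.snd_add, Pi.add_apply, mul_add, map_add,
      Finset.sum_add_distrib]
    ring

noncomputable def ofBits (ω : F4) (p : Bits α β) : Mixed α β :=
  (p.1, fun j => algebraMap (ZMod 2) F4 (p.2.1 j) + ω * algebraMap (ZMod 2) F4 (p.2.2 j))

/-- The coefficients of `1` and `ω` in `⟨ofBits ω p, ofBits ω p'⟩₄`. -/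
def bitsForm (p p' : Bits α β) : ZMod 2 × ZMod 2 :=
  (p.2.1 ⬝ᵥ p'.2.1 + p.2.2 ⬝ᵥ p'.2.2,
    p.1 ⬝ᵥ p'.1 + p.2.1 ⬝ᵥ p'.2.2 + p.2.2 ⬝ᵥ p'.2.1 + p.2.2 ⬝ᵥ p'.2.2)

variable {ω : F4}

lemma inner4_ofBits (hω : ω ^ 2 + ω + 1 = 0) (p p' : Bits α β) :
    inner4 ω (ofBits ω p) (ofBits ω p') =
      algebraMap (ZMod 2) F4 (bitsForm p p').1 + ω * algebraMap (ZMod 2) F4 (bitsForm p p').2 := by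
  have hmul (b q x y : F4) :
      (b + ω * q) * (x + ω * y) = b * x + q * y + ω * (b * y + q * x + q * y) := by
    linear_combination (q * y) * sq_eq_add_one_of_sq_add_add_one_eq_zero hω
  simp only [inner4, ofBits, bitsForm, dotProduct, map_add, map_sum, map_mul, hmul, mul_add,
    Finset.sum_add_distrib, Finset.mul_sum]
  ring

lemma inner4_ofBits_eq_zero_iff (hω : ω ^ 2 + ω + 1 = 0) (p p' : Bits α β) :
    inner4 ω (ofBits ω p) (ofBits ω p') = 0 ↔ bitsForm p p' = 0 := by
  rw [inner4_ofBits hω, algebraMap_add_mul_algebraMap_eq_zero_iff_s6 hω, Prod.ext_iff]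
  rfl

lemma ofBits_injective (hω : ω ^ 2 + ω + 1 = 0) :
    Function.Injective (ofBits ω : Bits α β → Mixed α β) := by
  rintro ⟨a, b, q⟩ ⟨a', b', q'⟩ h
  obtain ⟨rfl, h⟩ := Prod.mk.inj h
  have hbq (j : Fin β) : b j - b' j = 0 ∧ q j - q' j = 0 := by
    rw [← algebraMap_add_mul_algebraMap_eq_zero_iff_s6 hω, map_sub, map_sub]
    linear_combination congrFun h j
  simp only [sub_eq_zero] at hbq
  simp only [Prod.mk.injEq, funext_iff]
  exact ⟨trivial, fun j => (hbq j).1, fun j => (hbq j).2⟩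

lemma ofBits_bijective (hω : ω ^ 2 + ω + 1 = 0) :
    Function.Bijective (ofBits ω : Bits α β → Mixed α β) := by
  refine (ofBits_injective hω).bijective_of_nat_card_le ?_
  simp [Nat.card_prod, Nat.card_pi, GaloisField.card 2 2 two_ne_zero, ← mul_pow]

lemma orthogonal_closure_ofBits (hω : ω ^ 2 + ω + 1 = 0) (S : Set (Bits α β)) :
    {v | ∀ u ∈ AddSubgroup.closure (ofBits ω '' S), inner4 ω v u = 0} =
      ofBits ω '' {p | ∀ s ∈ S, bitsForm p s = 0} := by
  have hpre : ofBits ω ⁻¹' {v | ∀ u ∈ AddSubgroup.closure (ofBits ω '' S), inner4 ω v u = 0} =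
      {p | ∀ s ∈ S, bitsForm p s = 0} := by
    ext p
    exact (AddSubgroup.forall_mem_closure_eq_zero_iff (inner4Hom ω (ofBits ω p)) _).trans
      (Set.forall_mem_image.trans (forall₂_congr fun s _ => inner4_ofBits_eq_zero_iff hω p s))
  rw [← hpre, Set.image_preimage_eq _ (ofBits_bijective hω).surjective]

lemma binDual_image_closure {G F : Type*} [AddGroup G] [FunLike F G (Bits α β)]
    [AddMonoidHomClass F G (Bits α β)] (W : F) (S : Set G) :
    binDual (W '' AddSubgroup.closure S) = {y | ∀ s ∈ S, binPairing y (W s) = 0} := by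
  ext y
  exact Set.forall_mem_image.trans
    (AddSubgroup.forall_mem_closure_eq_zero_iff ((binPairing y).comp (W : G →+ Bits α β)) S)

end

open Finset in
theorem stmt_6_general (ω : F4) (hω : ω ^ 2 + ω + 1 = 0)
    (W : ((Fin 2 → ZMod 2) × (Fin 2 → F4)) →ₗ[ZMod 2]
        ((Fin 2 → ZMod 2) × (Fin 2 → ZMod 2) × (Fin 2 → ZMod 2)))
    (hW : ∀ (a b q : Fin 2 → ZMod 2),
      W (a, fun j => algebraMap (ZMod 2) F4 (b j) + ω * algebraMap (ZMod 2) F4 (q j))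
        = (a, b + q, q)) :
    let C : AddSubgroup ((Fin 2 → ZMod 2) × (Fin 2 → F4)) :=
      AddSubgroup.closure {(![1, 1], ![ω, 1]), (![0, 1], ![ω ^ 2, ω])}
    let Cperp : Set ((Fin 2 → ZMod 2) × (Fin 2 → F4)) :=
      {v | ∀ u ∈ C, inner4 ω v u = 0}
    (W '' Cperp ⊂ binDual (W '' (C : Set ((Fin 2 → ZMod 2) × (Fin 2 → F4))))) ∧
    (W '' Cperp).ncard = 4 ∧
    (binDual (W '' (C : Set ((Fin 2 → ZMod 2) × (Fin 2 → F4))))).ncard = 16 := by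
  intro C Cperp
  let gray : Bits 2 2 → Bits 2 2 := fun p => (p.1, p.2.1 + p.2.2, p.2.2)
  let gens : Finset (Bits 2 2) := {(![1, 1], ![0, 1], ![1, 0]), (![0, 1], ![1, 0], ![1, 1])}
  have hWbits (p : Bits 2 2) : W (ofBits ω p) = gray p := hW p.1 p.2.1 p.2.2
  have hgens : ({(![1, 1], ![ω, 1]), (![0, 1], ![ω ^ 2, ω])} : Set (Mixed 2 2)) =
      ofBits ω '' gens := by
    rw [coe_insert, coe_singleton, Set.image_pair]
    congr 2 <;> ext j <;> fin_cases j <;>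
      simp [ofBits, sq_eq_add_one_of_sq_add_add_one_eq_zero hω, add_comm]
  have hCperp :
      W '' Cperp = ↑((univ.filter fun p => ∀ s ∈ gens, bitsForm p s = 0).image gray) := by
    simp only [Cperp, C, hgens, orthogonal_closure_ofBits hω, Set.image_image, hWbits, coe_image,
      coe_filter, mem_coe, mem_univ, true_and]
  have hdual :
      binDual (W '' C) = ↑(univ.filter fun y => ∀ s ∈ gens, binPairing y (gray s) = 0) := by
    simp only [C, hgens, binDual_image_closure, Set.forall_mem_image, hWbits, coe_filter, mem_coe,
      mem_univ, true_and]
  rw [hCperp, hdual, Set.ncard_coe_finset, Set.ncard_coe_finset, coe_ssubset]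
  decide

/-- For the code `C` generated by `(1,1|ω,1)` and `(0,1|ω²,ω)` in `F_2² × F_4²`,
the set `W(C^⊥)` is a proper subset of `(W(C))^⊥`: it has 4 elements while
`(W(C))^⊥` has 16 elements. -/
theorem stmt_6 (ω : F4) (hω : ω ^ 2 + ω + 1 = 0)
    (W : ((Fin 2 → ZMod 2) × (Fin 2 → F4)) →ₗ[ZMod 2]
        ((Fin 2 → ZMod 2) × (Fin 2 → ZMod 2) × (Fin 2 → ZMod 2)))
    (hWbij : Function.Bijective W)
    (hW : ∀ (a b q : Fin 2 → ZMod 2),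
      W (a, fun j => algebraMap (ZMod 2) F4 (b j) + ω * algebraMap (ZMod 2) F4 (q j))
        = (a, b + q, q)) :
    let C : AddSubgroup ((Fin 2 → ZMod 2) × (Fin 2 → F4)) :=
      AddSubgroup.closure {(![1, 1], ![ω, 1]), (![0, 1], ![ω ^ 2, ω])}
    let Cperp : Set ((Fin 2 → ZMod 2) × (Fin 2 → F4)) :=
      {v | ∀ u ∈ C, inner4 ω v u = 0}
    (W '' Cperp ⊂ binDual (W '' (C : Set ((Fin 2 → ZMod 2) × (Fin 2 → F4))))) ∧
    (W '' Cperp).ncard = 4 ∧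
    (binDual (W '' (C : Set ((Fin 2 → ZMod 2) × (Fin 2 → F4))))).ncard = 16 :=
  stmt_6_general ω hω W hW
end

section
/- Let C be an F_2F_4-additive code generated over F_2 by vectors V_1,…,V_l such that ⟨V_i,V_j⟩₄ ∈ F_2 for all i ≠ j and ⟨V_i,V_i⟩₄ ∉ F_2 for all i. Then C is an ACD code, i.e., C ∩ C^⊥ = {0}. -/
section Bilinear

variable {R A M ι : Type*} [Field R] [Ring A] [Algebra R A] [AddCommGroup M] [Module R M]
  [Fintype ι]

theorem eq_zero_of_forall_bilin_sum_smul_eq_zero (B : LinearMap.BilinMap R M A) (V : ι → M)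
    (hoff : ∀ i j, i ≠ j → B (V i) (V j) ∈ (⊥ : Subalgebra R A))
    (hdiag : ∀ i, B (V i) (V i) ∉ (⊥ : Subalgebra R A))
    (c : ι → R) (hc : ∀ j, B (∑ i, c i • V i) (V j) = 0) : c = 0 := by
  classical
  funext j
  by_contra hcj
  set rest := ∑ i ∈ Finset.univ.erase j, c i • B (V i) (V j)
  have hrest : rest ∈ (⊥ : Subalgebra R A) :=
    Subalgebra.sum_mem _ fun i hi => Subalgebra.smul_mem _ (hoff i j (Finset.ne_of_mem_erase hi)) _
  have hsplit : c j • B (V j) (V j) + rest = 0 := by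
    rw [Finset.add_sum_erase _ (fun i => c i • B (V i) (V j)) (Finset.mem_univ j), ← hc j]
    simp only [map_sum, map_smul, LinearMap.smul_apply, LinearMap.sum_apply]
  have hdiag_eq : B (V j) (V j) = (c j)⁻¹ • -rest := by
    rw [← eq_neg_of_add_eq_zero_left hsplit, inv_smul_smul₀ hcj]
  exact hdiag j (hdiag_eq ▸ Subalgebra.smul_mem _ (Subalgebra.neg_mem _ hrest) _)

theorem eq_zero_of_mem_span_of_forall_bilin_eq_zero (B : LinearMap.BilinMap R M A) (V : ι → M)
    (hoff : ∀ i j, i ≠ j → B (V i) (V j) ∈ (⊥ : Subalgebra R A))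
    (hdiag : ∀ i, B (V i) (V i) ∉ (⊥ : Subalgebra R A)) :
    ∀ x ∈ Submodule.span R (Set.range V),
      (∀ u ∈ Submodule.span R (Set.range V), B x u = 0) → x = 0 := by
  intro x hx hxC
  obtain ⟨c, rfl⟩ := (Submodule.mem_span_range_iff_exists_fun R).mp hx
  have hc := eq_zero_of_forall_bilin_sum_smul_eq_zero B V hoff hdiag c
    fun j => hxC (V j) (Submodule.subset_span ⟨j, rfl⟩)
  simp [hc]

end Bilinear

theorem Subalgebra.coe_bot_zmod_two (A : Type*) [Ring A] [Algebra (ZMod 2) A] :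
    ((⊥ : Subalgebra (ZMod 2) A) : Set A) = {0, 1} := by
  ext x
  simp only [SetLike.mem_coe, Algebra.mem_bot, Set.mem_range, Set.mem_insert_iff,
    Set.mem_singleton_iff]
  constructor
  · rintro ⟨c, rfl⟩
    obtain rfl | rfl : c = 0 ∨ c = 1 := by revert c; decide
    exacts [Or.inl (map_zero _), Or.inr (map_one _)]
  · rintro (rfl | rfl)
    exacts [⟨0, map_zero _⟩, ⟨1, map_one _⟩]

section Inner4

variable {α β : ℕ} (ω : F4)

theorem inner4_comm (u v : (Fin α → ZMod 2) × (Fin β → F4)) :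
    inner4 ω u v = inner4 ω v u := by
  simp only [inner4, mul_comm (u.1 _), mul_comm (u.2 _)]

theorem inner4_add_left (u u' v : (Fin α → ZMod 2) × (Fin β → F4)) :
    inner4 ω (u + u') v = inner4 ω u v + inner4 ω u' v := by
  simp only [inner4, Prod.fst_add, Prod.snd_add, Pi.add_apply, add_mul, map_add,
    Finset.sum_add_distrib]
  ring

theorem inner4_smul_left (c : ZMod 2) (u v : (Fin α → ZMod 2) × (Fin β → F4)) :
    inner4 ω (c • u) v = c • inner4 ω u v := by
  simp only [inner4, Prod.smul_fst, Prod.smul_snd, Pi.smul_apply, smul_eq_mul]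
  simp only [Algebra.smul_def, map_mul, mul_add, Finset.mul_sum]
  congr 1 <;> exact Finset.sum_congr rfl fun _ _ => by ring

noncomputable def inner4Bilin : LinearMap.BilinMap (ZMod 2) ((Fin α → ZMod 2) × (Fin β → F4)) F4 :=
  LinearMap.mk₂ (ZMod 2) (inner4 ω) (inner4_add_left ω) (inner4_smul_left ω)
    (fun u v v' => by simp only [inner4_comm ω u, inner4_add_left])
    (fun c u v => by simp only [inner4_comm ω u, inner4_smul_left])

end Inner4

theorem stmt_8_general (α β l : ℕ) (ω : F4)
    (V : Fin l → (Fin α → ZMod 2) × (Fin β → F4))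
    (hoff : ∀ i j, i ≠ j → inner4 ω (V i) (V j) ∈ ({0, 1} : Set F4))
    (hdiag : ∀ i, inner4 ω (V i) (V i) ∉ ({0, 1} : Set F4)) :
    ∀ x ∈ Submodule.span (ZMod 2) (Set.range V),
      (∀ u ∈ Submodule.span (ZMod 2) (Set.range V), inner4 ω x u = 0) → x = 0 := by
  rw [← Subalgebra.coe_bot_zmod_two] at hoff hdiag
  exact eq_zero_of_mem_span_of_forall_bilin_eq_zero (inner4Bilin ω) V hoff hdiag

/-- Case I of Theorem: if `⟨Vᵢ,Vⱼ⟩₄ ∈ F_2 = {0,1}` for `i ≠ j` and `⟨Vᵢ,Vᵢ⟩₄ ∉ F_2`, then the `F_2`-span `C` of the `Vᵢ` is an ACD code: `C ∩ C^⊥ = {0}`. -/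
theorem stmt_8 (α β l : ℕ) (ω : F4) (hω : ω ^ 2 + ω + 1 = 0)
    (V : Fin l → (Fin α → ZMod 2) × (Fin β → F4))
    (hoff : ∀ i j, i ≠ j → inner4 ω (V i) (V j) ∈ ({0, 1} : Set F4))
    (hdiag : ∀ i, inner4 ω (V i) (V i) ∉ ({0, 1} : Set F4)) :
    ∀ x ∈ Submodule.span (ZMod 2) (Set.range V),
      (∀ u ∈ Submodule.span (ZMod 2) (Set.range V), inner4 ω x u = 0) → x = 0 :=
  stmt_8_general α β l ω V hoff hdiag
end

section
/- Let C be an F_2F_4-additive code generated over F_2 by vectors V_1,…,V_l such that ⟨V_i,V_j⟩₄ ∈ {0, ω} for all i ≠ j and ⟨V_i,V_i⟩₄ ∉ {0, ω} for all i. Then C is an ACD code, i.e., C ∩ C^⊥ = {0}. -/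
theorem LinearMap.map_sum_smul_notMem {K M N ι : Type*} [Field K] [AddCommGroup M] [Module K M]
    [AddCommGroup N] [Module K N] [Fintype ι] [DecidableEq ι] (f : M →ₗ[K] N)
    {S : Submodule K N} {V : ι → M} {c : ι → K} {j : ι} (hc : c j ≠ 0)
    (hoff : ∀ i ≠ j, f (V i) ∈ S) (hdiag : f (V j) ∉ S) :
    f (∑ i, c i • V i) ∉ S := by
  have hrest : ∑ i ∈ Finset.univ.erase j, f (c i • V i) ∈ S :=
    S.sum_mem fun i hi => by
      rw [map_smul]
      exact S.smul_mem _ (hoff i (Finset.ne_of_mem_erase hi))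
  rw [map_sum, ← Finset.add_sum_erase _ _ (Finset.mem_univ j), S.add_mem_iff_left hrest,
    map_smul, S.smul_mem_iff hc]
  exact hdiag

theorem ZMod.two_span_singleton_eq {M : Type*} [AddCommGroup M] [Module (ZMod 2) M] (a : M) :
    ((ZMod 2 ∙ a : Submodule (ZMod 2) M) : Set M) = {0, a} := by
  ext y
  simp only [SetLike.mem_coe, Submodule.mem_span_singleton, Set.mem_insert_iff,
    Set.mem_singleton_iff]
  constructor
  · rintro ⟨c, rfl⟩
    fin_cases c
    exacts [Or.inl (zero_smul _ _), Or.inr (one_smul _ _)]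
  · rintro (rfl | rfl)
    exacts [⟨0, zero_smul _ _⟩, ⟨1, one_smul _ _⟩]

noncomputable def inner4Left {α β : ℕ} (ω : F4) (v : (Fin α → ZMod 2) × (Fin β → F4)) :
    ((Fin α → ZMod 2) × (Fin β → F4)) →ₗ[ZMod 2] F4 where
  toFun u := inner4 ω u v
  map_add' u u' := by
    simp only [inner4, Prod.fst_add, Prod.snd_add, Pi.add_apply, add_mul, map_add,
      Finset.sum_add_distrib]
    ring
  map_smul' c u := by
    simp only [inner4, Prod.smul_fst, Prod.smul_snd, Pi.smul_apply, smul_eq_mul, map_mul,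
      RingHom.id_apply]
    simp only [Algebra.smul_def, mul_add, Finset.mul_sum, mul_assoc, mul_left_comm]

theorem stmt_9_general (α β l : ℕ) (ω : F4)
    (V : Fin l → (Fin α → ZMod 2) × (Fin β → F4))
    (hoff : ∀ i j, i ≠ j → inner4 ω (V i) (V j) ∈ ({0, ω} : Set F4))
    (hdiag : ∀ i, inner4 ω (V i) (V i) ∉ ({0, ω} : Set F4)) :
    ∀ x ∈ Submodule.span (ZMod 2) (Set.range V),
      (∀ u ∈ Submodule.span (ZMod 2) (Set.range V), inner4 ω x u = 0) → x = 0 := by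
  classical
  intro x hx hperp
  obtain ⟨c, rfl⟩ := (Submodule.mem_span_range_iff_exists_fun (ZMod 2)).mp hx
  by_contra hx0
  obtain ⟨j, hj⟩ : ∃ j, c j ≠ 0 := by
    by_contra! hc
    simp [hc] at hx0
  have hS := ZMod.two_span_singleton_eq ω
  have hperp_j : inner4Left ω (V j) (∑ i, c i • V i) ∈ ZMod 2 ∙ ω := by
    rw [← SetLike.mem_coe, hS]
    exact Or.inl (hperp (V j) (Submodule.subset_span ⟨j, rfl⟩))
  refine (inner4Left ω (V j)).map_sum_smul_notMem hj (fun i hi => ?_) ?_ hperp_j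
  · rw [← SetLike.mem_coe, hS]
    exact hoff i j hi
  · rw [← SetLike.mem_coe, hS]
    exact hdiag j

/-- Case II: if `⟨Vᵢ,Vⱼ⟩₄ ∈ {0, ω}` for `i ≠ j` and `⟨Vᵢ,Vᵢ⟩₄ ∉ {0, ω}`, then the `F_2`-span `C` of the `Vᵢ` is an ACD code: `C ∩ C^⊥ = {0}`. -/
theorem stmt_9 (α β l : ℕ) (ω : F4) (hω : ω ^ 2 + ω + 1 = 0)
    (V : Fin l → (Fin α → ZMod 2) × (Fin β → F4))
    (hoff : ∀ i j, i ≠ j → inner4 ω (V i) (V j) ∈ ({0, ω} : Set F4))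
    (hdiag : ∀ i, inner4 ω (V i) (V i) ∉ ({0, ω} : Set F4)) :
    ∀ x ∈ Submodule.span (ZMod 2) (Set.range V),
      (∀ u ∈ Submodule.span (ZMod 2) (Set.range V), inner4 ω x u = 0) → x = 0 :=
  stmt_9_general α β l ω V hoff hdiag
end

section
/- Let C be an F_2F_4-additive code generated over F_2 by vectors V_1,…,V_l such that ⟨V_i,V_j⟩₄ = 0 for all i ≠ j and ⟨V_i,V_i⟩₄ ≠ 0 for all i. Then C is an ACD code, i.e., C ∩ C^⊥ = {0}. -/
/-! Since the `Vᵢ` are pairwise orthogonal, pairing `x = ∑ cᵢ Vᵢ` with `V j` leaves only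
`c j ⟨V j, V j⟩₄`; as `⟨V j, V j⟩₄ ≠ 0`, orthogonality of `x` to the code forces every `c j = 0`. -/

theorem eq_zero_of_mem_span_of_biorthogonal {ι R M N : Type*} [Fintype ι] [Semiring R]
    [AddCommMonoid M] [Module R M] [AddCommMonoid N] [Module R N] [NoZeroSMulDivisors R N]
    (V : ι → M) (L : ι → M →ₗ[R] N)
    (hoff : ∀ i j, i ≠ j → L j (V i) = 0) (hdiag : ∀ i, L i (V i) ≠ 0)
    {x : M} (hx : x ∈ Submodule.span R (Set.range V)) (hL : ∀ j, L j x = 0) : x = 0 := by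
  obtain ⟨c, rfl⟩ := (Submodule.mem_span_range_iff_exists_fun R).mp hx
  have hc : ∀ j, c j = 0 := fun j => by
    have hLj : L j (∑ i, c i • V i) = c j • L j (V j) := by
      rw [map_sum, Finset.sum_eq_single j
        (fun i _ hij => by rw [map_smul, hoff i j hij, smul_zero])
        (fun hj => absurd (Finset.mem_univ j) hj), map_smul]
    have hsmul : c j • L j (V j) = 0 := hLj.symm.trans (hL j)
    exact (NoZeroSMulDivisors.eq_zero_or_eq_zero_of_smul_eq_zero hsmul).resolve_right (hdiag j)
  simp [hc]

noncomputable def inner4LeftLinear {α β : ℕ} (ω : F4) (u : (Fin α → ZMod 2) × (Fin β → F4)) :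
    ((Fin α → ZMod 2) × (Fin β → F4)) →ₗ[ZMod 2] F4 where
  toFun x := inner4 ω x u
  map_add' x y := by
    simp only [inner4, Prod.fst_add, Prod.snd_add, Pi.add_apply, add_mul, map_add,
      Finset.sum_add_distrib]
    ring
  map_smul' c x := by
    simp only [inner4, Prod.smul_fst, Prod.smul_snd, Pi.smul_apply]
    simp only [smul_eq_mul, Algebra.smul_def, map_mul, mul_assoc, ← Finset.mul_sum,
      RingHom.id_apply]
    ring

theorem stmt_10_general (α β l : ℕ) (ω : F4)
    (V : Fin l → (Fin α → ZMod 2) × (Fin β → F4))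
    (hoff : ∀ i j, i ≠ j → inner4 ω (V i) (V j) = 0)
    (hdiag : ∀ i, inner4 ω (V i) (V i) ≠ 0) :
    ∀ x ∈ Submodule.span (ZMod 2) (Set.range V),
      (∀ u ∈ Submodule.span (ZMod 2) (Set.range V), inner4 ω x u = 0) → x = 0 :=
  fun _ hx h => eq_zero_of_mem_span_of_biorthogonal V (fun j => inner4LeftLinear ω (V j))
    hoff hdiag hx fun j => h (V j) (Submodule.subset_span ⟨j, rfl⟩)

/-- If `⟨Vᵢ,Vⱼ⟩₄ = 0` for `i ≠ j` and `⟨Vᵢ,Vᵢ⟩₄ ≠ 0`, then the `F_2`-span `C` of the `Vᵢ` is an ACD code: `C ∩ C^⊥ = {0}`. -/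
theorem stmt_10 (α β l : ℕ) (ω : F4) (hω : ω ^ 2 + ω + 1 = 0)
    (V : Fin l → (Fin α → ZMod 2) × (Fin β → F4))
    (hoff : ∀ i j, i ≠ j → inner4 ω (V i) (V j) = 0)
    (hdiag : ∀ i, inner4 ω (V i) (V i) ≠ 0) :
    ∀ x ∈ Submodule.span (ZMod 2) (Set.range V),
      (∀ u ∈ Submodule.span (ZMod 2) (Set.range V), inner4 ω x u = 0) → x = 0 :=
  stmt_10_general α β l ω V hoff hdiag
end

section
/- Let C be an F_2F_4-additive code such that the punctured binary code C_X is LCD, the punctured quaternary code C_Y is self-orthogonal (C_Y ⊆ C_Y^⊥), and the binary part of every nonzero codeword of C is nonzero. Then C is an ACD code. -/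
/-!
Self-orthogonality of `C_Y` kills the quaternary half of `⟨x, u⟩₄` for codewords `x, u`, so
for `x ∈ C ∩ C^⊥` the binary part of `x` is orthogonal to all of `C_X`; as `C_X` is LCD it
vanishes, and a codeword with zero binary part is zero.
-/

theorem ne_zero_of_sq_add_self_add_one_eq_zero {R : Type*} [Semiring R] [Nontrivial R] {ω : R}
    (hω : ω ^ 2 + ω + 1 = 0) : ω ≠ 0 := by
  rintro rfl
  simp at hω

theorem inner4_eq {α β : ℕ} (ω : F4) (u v : (Fin α → ZMod 2) × (Fin β → F4)) :
    inner4 ω u v =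
      ω * algebraMap (ZMod 2) F4 (∑ i, u.1 i * v.1 i) + ∑ j, u.2 j * v.2 j := by
  rw [inner4, map_sum]

theorem binary_dot_eq_zero_of_inner4_eq_zero {α β : ℕ} {ω : F4} (hω : ω ≠ 0)
    {u v : (Fin α → ZMod 2) × (Fin β → F4)} (hY : ∑ j, u.2 j * v.2 j = 0)
    (huv : inner4 ω u v = 0) : ∑ i, u.1 i * v.1 i = 0 := by
  rw [inner4_eq, hY, add_zero] at huv
  exact (map_eq_zero _).mp ((mul_eq_zero.mp huv).resolve_left hω)

/-- If `C_X` is a binary LCD code, `C_Y` is self-orthogonal over `F_4`, and the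
binary part of every nonzero codeword of `C` is nonzero, then `C` is ACD. -/
theorem stmt_11 (α β : ℕ) (ω : F4) (hω : ω ^ 2 + ω + 1 = 0)
    (C : AddSubgroup ((Fin α → ZMod 2) × (Fin β → F4)))
    (hXlcd : ∀ a : Fin α → ZMod 2, (∃ b, (a, b) ∈ C) →
      (∀ a' : Fin α → ZMod 2, (∃ b', (a', b') ∈ C) → ∑ i, a i * a' i = 0) → a = 0)
    (hYso : ∀ b b' : Fin β → F4, (∃ a, (a, b) ∈ C) → (∃ a', (a', b') ∈ C) →
      ∑ j, b j * b' j = 0)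
    (hbin : ∀ u ∈ C, u ≠ 0 → u.1 ≠ 0) :
    ∀ x ∈ C, (∀ u ∈ C, inner4 ω x u = 0) → x = 0 := by
  intro x hx hperp
  have hX : x.1 = 0 := by
    refine hXlcd x.1 ⟨x.2, hx⟩ fun a' ⟨b', hb'⟩ => ?_
    exact binary_dot_eq_zero_of_inner4_eq_zero (ne_zero_of_sq_add_self_add_one_eq_zero hω)
      (hYso x.2 b' ⟨x.1, hx⟩ ⟨a', hb'⟩) (hperp _ hb')
  by_contra hne
  exact hbin x hx hne hX
end

section
/- Let C be an F_2F_4-additive code such that C_X is not a binary LCD code and C_Y is an F_4-additive self-orthogonal code. Then C is not an ACD code (i.e., C ∩ C^⊥ ≠ {0}). -/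
theorem inner4_eq_zero_of_sum_mul_eq_zero {α β : ℕ} (ω : F4) {u v : (Fin α → ZMod 2) × (Fin β → F4)}
    (hX : ∑ i, u.1 i * v.1 i = 0) (hY : ∑ j, u.2 j * v.2 j = 0) : inner4 ω u v = 0 := by
  rw [inner4, ← map_sum, hX, hY, map_zero, mul_zero, add_zero]

theorem stmt_12_general (α β : ℕ) (ω : F4)
    (C : AddSubgroup ((Fin α → ZMod 2) × (Fin β → F4)))
    (hXnotlcd : ∃ a : Fin α → ZMod 2, a ≠ 0 ∧ (∃ b, (a, b) ∈ C) ∧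
      (∀ a' : Fin α → ZMod 2, (∃ b', (a', b') ∈ C) → ∑ i, a i * a' i = 0))
    (hYso : ∀ b b' : Fin β → F4, (∃ a, (a, b) ∈ C) → (∃ a', (a', b') ∈ C) →
      ∑ j, b j * b' j = 0) :
    ∃ x, x ≠ 0 ∧ x ∈ C ∧ (∀ u ∈ C, inner4 ω x u = 0) := by
  obtain ⟨a, ha0, ⟨b, hab⟩, horth⟩ := hXnotlcd
  refine ⟨(a, b), fun h => ha0 (congrArg Prod.fst h), hab, ?_⟩
  rintro ⟨a', b'⟩ hu
  exact inner4_eq_zero_of_sum_mul_eq_zero ω (horth a' ⟨b', hu⟩) (hYso b b' ⟨a, hab⟩ ⟨a', hu⟩)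

/-- If `C_X` is not a binary LCD code and `C_Y` is self-orthogonal over `F_4`,
then `C` is not an ACD code: `C ∩ C^⊥ ≠ {0}`. -/
theorem stmt_12 (α β : ℕ) (ω : F4) (hω : ω ^ 2 + ω + 1 = 0)
    (C : AddSubgroup ((Fin α → ZMod 2) × (Fin β → F4)))
    (hXnotlcd : ∃ a : Fin α → ZMod 2, a ≠ 0 ∧ (∃ b, (a, b) ∈ C) ∧
      (∀ a' : Fin α → ZMod 2, (∃ b', (a', b') ∈ C) → ∑ i, a i * a' i = 0))
    (hYso : ∀ b b' : Fin β → F4, (∃ a, (a, b) ∈ C) → (∃ a', (a', b') ∈ C) →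
      ∑ j, b j * b' j = 0) :
    ∃ x, x ≠ 0 ∧ x ∈ C ∧ (∀ u ∈ C, inner4 ω x u = 0) :=
  stmt_12_general α β ω C hXnotlcd hYso
end

section
/- Let C be an F_2F_4-additive code such that C_X is a binary self-orthogonal code, C_Y is an ACD code over F_4 (C_Y ∩ C_Y^⊥ = {0}), and the quaternary part b of every nonzero codeword (a|b) ∈ C is nonzero. Then C is an ACD code. -/
/-
The binary parts of any two codewords are orthogonal, so on `C` the form `⟨·,·⟩₄` reduces to the
Euclidean form of the quaternary parts. Hence a codeword `x` orthogonal to `C` has `x.2 ∈ C_Y ∩ C_Y^⊥`,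
so `x.2 = 0`, and then `x = 0` because nonzero codewords have nonzero quaternary part.
-/

theorem inner4_eq_sum_of_sum_mul_eq_zero {α β : ℕ} (ω : F4)
    {u v : (Fin α → ZMod 2) × (Fin β → F4)} (h : ∑ i, u.1 i * v.1 i = 0) :
    inner4 ω u v = ∑ j, u.2 j * v.2 j := by
  rw [inner4, ← map_sum, h, map_zero, mul_zero, zero_add]

theorem stmt_13_general (α β : ℕ) (ω : F4)
    (C : AddSubgroup ((Fin α → ZMod 2) × (Fin β → F4)))
    (hXso : ∀ a a' : Fin α → ZMod 2, (∃ b, (a, b) ∈ C) → (∃ b', (a', b') ∈ C) →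
      ∑ i, a i * a' i = 0)
    (hYacd : ∀ b : Fin β → F4, (∃ a, (a, b) ∈ C) →
      (∀ b' : Fin β → F4, (∃ a', (a', b') ∈ C) → ∑ j, b j * b' j = 0) → b = 0)
    (hquat : ∀ u ∈ C, u ≠ 0 → u.2 ≠ 0) :
    ∀ x ∈ C, (∀ u ∈ C, inner4 ω x u = 0) → x = 0 := by
  intro x hx hperp
  have hx₂ : x.2 = 0 := by
    refine hYacd x.2 ⟨x.1, hx⟩ fun b' ⟨a', hu⟩ => ?_
    rw [← inner4_eq_sum_of_sum_mul_eq_zero ω (v := (a', b')) (hXso x.1 a' ⟨x.2, hx⟩ ⟨b', hu⟩)]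
    exact hperp _ hu
  by_contra hne
  exact hquat x hx hne hx₂

/-- If `C_X` is a binary self-orthogonal code, `C_Y` is an ACD code over `F_4`, and
the quaternary part of every nonzero codeword of `C` is nonzero, then `C` is ACD. -/
theorem stmt_13 (α β : ℕ) (ω : F4) (hω : ω ^ 2 + ω + 1 = 0)
    (C : AddSubgroup ((Fin α → ZMod 2) × (Fin β → F4)))
    (hXso : ∀ a a' : Fin α → ZMod 2, (∃ b, (a, b) ∈ C) → (∃ b', (a', b') ∈ C) →
      ∑ i, a i * a' i = 0)
    (hYacd : ∀ b : Fin β → F4, (∃ a, (a, b) ∈ C) →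
      (∀ b' : Fin β → F4, (∃ a', (a', b') ∈ C) → ∑ j, b j * b' j = 0) → b = 0)
    (hquat : ∀ u ∈ C, u ≠ 0 → u.2 ≠ 0) :
    ∀ x ∈ C, (∀ u ∈ C, inner4 ω x u = 0) → x = 0 :=
  stmt_13_general α β ω C hXso hYacd hquat
end
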